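/- arXiv:2407.10579 — 8 statements merged into one kernel-verified Lean document; each statement's English description precedes it below -/
import Mathlib

section
/- Let m, n be nonempty finite types. Let D_x, Dˣ, Dˣ_x, M_x be real m×m matrices with M_x invertible, and let D_y, M_y be real n×n matrices with M_y invertible. For u, v : m×n → ℝ define DIV(u,v) := (D_x ⊗ M_y)·u + (M_x ⊗ D_y)·v and ∂ₓDIV(u,v) := −(Dˣ_x ⊗ M_y)·u − (Dˣ ⊗ D_y)·v. Assume that for every u : m×n → ℝ there exists v : m×n → ℝ with DIV(u,v) = 0. Then the following are equivalent: (1) Dˣ_x = Dˣ · M_x⁻¹ · D_x; (2) for all u, v with DIV(u,v) = 0, one has ∂ₓDIV(u,v) = 0. -/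
open Kronecker

lemma matrix_eq_of_mulVec_eq {m : Type*} [Fintype m] [DecidableEq m]
    (A B : Matrix m m ℝ) (h : ∀ u, A.mulVec u = B.mulVec u) : A = B := by
  ext i j
  have := congrFun (h (Pi.single j 1)) i
  simpa [Matrix.mulVec_single] using this

/-- Equivalence between the compatibility condition `Dˣ_x = Dˣ · M_x⁻¹ · D_x` and
preservation of the discrete divergence: the stabilization term `∂ₓ DIV` vanishes on
all discretely divergence-free states iff the stiffness matrix is the compatible one. -/
theorem gradDiv_compatibility_iff {m n : Type*} [Fintype m] [Fintype n]
    [Nonempty m] [Nonempty n] [DecidableEq m] [DecidableEq n]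
    (Dx Dupx Dxx Mx : Matrix m m ℝ) (hMx : IsUnit Mx)
    (Dy My : Matrix n n ℝ) (hMy : IsUnit My)
    (DIV : (m × n → ℝ) → (m × n → ℝ) → (m × n → ℝ))
    (hDIV : ∀ u v, DIV u v = (Dx ⊗ₖ My).mulVec u + (Mx ⊗ₖ Dy).mulVec v)
    (pdDIV : (m × n → ℝ) → (m × n → ℝ) → (m × n → ℝ))
    (hpdDIV : ∀ u v, pdDIV u v = -((Dxx ⊗ₖ My).mulVec u) - (Dupx ⊗ₖ Dy).mulVec v)
    (hsurj : ∀ u : m × n → ℝ, ∃ v : m × n → ℝ, DIV u v = 0) :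
    Dxx = Dupx * Mx⁻¹ * Dx ↔ ∀ u v : m × n → ℝ, DIV u v = 0 → pdDIV u v = 0 := by
  have hMxdet : IsUnit Mx.det := (Matrix.isUnit_iff_isUnit_det Mx).mp hMx
  have hMydet : IsUnit My.det := (Matrix.isUnit_iff_isUnit_det My).mp hMy
  have hinvmul : Mx⁻¹ * Mx = 1 := Matrix.nonsing_inv_mul Mx hMxdet
  set E : Matrix m m ℝ := Dupx * Mx⁻¹ with hE
  have key1 : (E ⊗ₖ (1 : Matrix n n ℝ)) * (Mx ⊗ₖ Dy) = Dupx ⊗ₖ Dy := by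
    rw [← Matrix.mul_kronecker_mul, hE, Matrix.mul_assoc, hinvmul, Matrix.mul_one,
      Matrix.one_mul]
  have key2 : (E ⊗ₖ (1 : Matrix n n ℝ)) * (Dx ⊗ₖ My) = (E * Dx) ⊗ₖ My := by
    rw [← Matrix.mul_kronecker_mul, Matrix.one_mul]
  constructor
  · intro h u v huv
    rw [hDIV] at huv
    rw [hpdDIV]
    have h3 : Dxx ⊗ₖ My = (E ⊗ₖ (1 : Matrix n n ℝ)) * (Dx ⊗ₖ My) := by
      rw [key2, h, hE, Matrix.mul_assoc]
    calc -((Dxx ⊗ₖ My).mulVec u) - (Dupx ⊗ₖ Dy).mulVec v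
        = -((E ⊗ₖ (1 : Matrix n n ℝ)).mulVec
            ((Dx ⊗ₖ My).mulVec u + (Mx ⊗ₖ Dy).mulVec v)) := by
          rw [h3, ← key1, Matrix.mulVec_add, ← Matrix.mulVec_mulVec,
            ← Matrix.mulVec_mulVec, neg_add, sub_eq_add_neg]
      _ = 0 := by rw [huv]; simp [Matrix.mulVec_zero]
  · intro h
    have hmv : ∀ u, (Dxx ⊗ₖ My).mulVec u = ((E * Dx) ⊗ₖ My).mulVec u := by
      intro u
      obtain ⟨v, hv⟩ := hsurj u
      have h1 := h u v hv
      rw [hpdDIV] at h1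
      rw [hDIV] at hv
      have e1 : (Dxx ⊗ₖ My).mulVec u = -((Dupx ⊗ₖ Dy).mulVec v) := by
        have := sub_eq_zero.mp h1
        linear_combination (norm := module) -this
      have e2 : (Dx ⊗ₖ My).mulVec u = -((Mx ⊗ₖ Dy).mulVec v) :=
        eq_neg_of_add_eq_zero_left hv
      rw [e1, ← key2, ← Matrix.mulVec_mulVec, e2, Matrix.mulVec_neg,
        Matrix.mulVec_mulVec, key1]
    have hK : Dxx ⊗ₖ My = (E * Dx) ⊗ₖ My :=
      matrix_eq_of_mulVec_eq _ _ hmv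
    have hK2 : (Dxx ⊗ₖ My) * ((1 : Matrix m m ℝ) ⊗ₖ My⁻¹)
        = ((E * Dx) ⊗ₖ My) * ((1 : Matrix m m ℝ) ⊗ₖ My⁻¹) := by rw [hK]
    rw [← Matrix.mul_kronecker_mul, ← Matrix.mul_kronecker_mul,
      Matrix.mul_one, Matrix.mul_one, Matrix.mul_nonsing_inv My hMydet] at hK2
    have : Dxx = E * Dx := by
      ext i k
      obtain ⟨j⟩ := ‹Nonempty n›
      have := congrFun (congrFun hK2 (i, j)) (k, j)
      simpa [Matrix.kroneckerMap_apply, Matrix.one_apply] using this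
    rw [this, hE, Matrix.mul_assoc]
end

section
/- Let m, n be finite types; let M_x, D_x, Dˣ_x, I_x be real m×m matrices and M_y, D_y, Dʸ_y, I_y real n×n matrices; let α, h, c be real numbers. Assume D_x·𝟙 = 0, Dˣ_x·𝟙 = 0, D_y·𝟙 = 0, Dʸ_y·𝟙 = 0 (the derivative matrices annihilate the all-ones vector). Let u, v : m×n → ℝ, let p = c·𝟙 be the constant vector, and assume that W := (𝕀_m ⊗ I_y)·u + (I_x ⊗ 𝕀_n)·v has the form W(i,j) = f(i) + g(j) for some f : m → ℝ, g : n → ℝ. Then all three block equations of the Global Flux SUPG scheme vanish: (i) (D_x ⊗ M_y)·p + αh·[(Dˣ_x ⊗ (D_y·I_y))·u + ((Dˣ_x·I_x) ⊗ D_y)·v] = 0; (ii) (M_x ⊗ D_y)·p + αh·[(D_x ⊗ (Dʸ_y·I_y))·u + ((D_x·I_x) ⊗ Dʸ_y)·v] = 0; (iii) (D_x ⊗ (D_y·I_y))·u + ((D_x·I_x) ⊗ D_y)·v + αh·[(Dˣ_x ⊗ M_y) + (M_x ⊗ Dʸ_y)]·p = 0. Hence (u,v,p) is a steady state of the SUPG-GFq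 evolution operator. -/
open Kronecker

private lemma kron_const_left {m n : Type*} [Fintype m] [Fintype n]
    (A : Matrix m m ℝ) (B : Matrix n n ℝ) (c : ℝ)
    (hA : A.mulVec (fun _ => (1 : ℝ)) = 0) :
    (A ⊗ₖ B).mulVec (c • (1 : m × n → ℝ)) = 0 := by
  funext ij
  obtain ⟨i, j⟩ := ij
  have hA' : ∑ k, A i k = 0 := by
    have := congrFun hA i
    simpa [Matrix.mulVec, dotProduct] using this
  simp only [Matrix.mulVec, dotProduct, Fintype.sum_prod_type,
    Matrix.kroneckerMap_apply, Pi.smul_apply, Pi.one_apply, smul_eq_mul, mul_one,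
    Pi.zero_apply]
  calc ∑ k, ∑ l, A i k * B j l * c
      = ∑ k, A i k * ∑ l, B j l * c := by
        simp [Finset.mul_sum, mul_assoc]
    _ = (∑ k, A i k) * ∑ l, B j l * c := by rw [Finset.sum_mul]
    _ = 0 := by rw [hA']; ring

private lemma kron_const_right {m n : Type*} [Fintype m] [Fintype n]
    (A : Matrix m m ℝ) (B : Matrix n n ℝ) (c : ℝ)
    (hB : B.mulVec (fun _ => (1 : ℝ)) = 0) :
    (A ⊗ₖ B).mulVec (c • (1 : m × n → ℝ)) = 0 := by
  funext ij
  obtain ⟨i, j⟩ := ij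
  have hB' : ∑ l, B j l = 0 := by
    have := congrFun hB j
    simpa [Matrix.mulVec, dotProduct] using this
  simp only [Matrix.mulVec, dotProduct, Fintype.sum_prod_type,
    Matrix.kroneckerMap_apply, Pi.smul_apply, Pi.one_apply, smul_eq_mul, mul_one,
    Pi.zero_apply]
  calc ∑ k, ∑ l, A i k * B j l * c
      = ∑ k, A i k * ((∑ l, B j l) * c) := by
        simp [Finset.mul_sum, Finset.sum_mul, mul_assoc]
    _ = 0 := by rw [hB']; simp

private lemma kron_split_zero {m n : Type*} [Fintype m] [Fintype n]
    (A : Matrix m m ℝ) (B : Matrix n n ℝ) (f : m → ℝ) (g : n → ℝ)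
    (hA : A.mulVec (fun _ => (1 : ℝ)) = 0)
    (hB : B.mulVec (fun _ => (1 : ℝ)) = 0) :
    (A ⊗ₖ B).mulVec (fun q : m × n => f q.1 + g q.2) = 0 := by
  funext ij
  obtain ⟨i, j⟩ := ij
  have hA' : ∑ k, A i k = 0 := by
    have := congrFun hA i
    simpa [Matrix.mulVec, dotProduct] using this
  have hB' : ∑ l, B j l = 0 := by
    have := congrFun hB j
    simpa [Matrix.mulVec, dotProduct] using this
  simp only [Matrix.mulVec, dotProduct, Fintype.sum_prod_type,
    Matrix.kroneckerMap_apply, Pi.zero_apply]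
  calc ∑ k, ∑ l, A i k * B j l * (f k + g l)
      = ∑ k, (A i k * f k * ∑ l, B j l + A i k * ∑ l, B j l * g l) := by
        apply Finset.sum_congr rfl
        intro k _
        rw [Finset.mul_sum, Finset.mul_sum, ← Finset.sum_add_distrib]
        apply Finset.sum_congr rfl
        intro l _
        ring
    _ = 0 := by
        rw [hB']
        simp only [mul_zero, zero_add]
        rw [← Finset.sum_mul, hA']
        simp

/-- Equilibria of the Global-Flux-quadrature SUPG scheme: any state with constant pressure
and velocities whose global flux potential `W = (𝕀 ⊗ I_y)u + (I_x ⊗ 𝕀)v` splits as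
`W(i,j) = f(i) + g(j)` makes all three block equations of the SUPG-GFq evolution
operator vanish. -/
theorem supg_gfq_equilibrium {m n : Type*} [Fintype m] [Fintype n]
    [DecidableEq m] [DecidableEq n]
    (Mx Dx Dxx Ix : Matrix m m ℝ) (My Dy Dyy Iy : Matrix n n ℝ)
    (α h c : ℝ)
    (hDx : Dx.mulVec (fun _ => (1 : ℝ)) = 0)
    (hDxx : Dxx.mulVec (fun _ => (1 : ℝ)) = 0)
    (hDy : Dy.mulVec (fun _ => (1 : ℝ)) = 0)
    (hDyy : Dyy.mulVec (fun _ => (1 : ℝ)) = 0)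
    (u v p : m × n → ℝ)
    (hp : p = c • (1 : m × n → ℝ))
    (f : m → ℝ) (g : n → ℝ)
    (hW : ∀ i j,
      ((1 : Matrix m m ℝ) ⊗ₖ Iy).mulVec u (i, j) + (Ix ⊗ₖ (1 : Matrix n n ℝ)).mulVec v (i, j)
        = f i + g j) :
    (Dx ⊗ₖ My).mulVec p
        + (α * h) • ((Dxx ⊗ₖ (Dy * Iy)).mulVec u + ((Dxx * Ix) ⊗ₖ Dy).mulVec v) = 0 ∧
    (Mx ⊗ₖ Dy).mulVec p
        + (α * h) • ((Dx ⊗ₖ (Dyy * Iy)).mulVec u + ((Dx * Ix) ⊗ₖ Dyy).mulVec v) = 0 ∧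
    (Dx ⊗ₖ (Dy * Iy)).mulVec u + ((Dx * Ix) ⊗ₖ Dy).mulVec v
        + (α * h) • ((Dxx ⊗ₖ My) + (Mx ⊗ₖ Dyy)).mulVec p = 0 := by
  have hfac : ∀ (A : Matrix m m ℝ) (B : Matrix n n ℝ),
      (A ⊗ₖ (B * Iy)).mulVec u + ((A * Ix) ⊗ₖ B).mulVec v
        = (A ⊗ₖ B).mulVec (fun q : m × n => f q.1 + g q.2) := by
    intro A B
    have h1 : A ⊗ₖ (B * Iy) = (A ⊗ₖ B) * ((1 : Matrix m m ℝ) ⊗ₖ Iy) := by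
      rw [← Matrix.mul_kronecker_mul, Matrix.mul_one]
    have h2 : (A * Ix) ⊗ₖ B = (A ⊗ₖ B) * (Ix ⊗ₖ (1 : Matrix n n ℝ)) := by
      rw [← Matrix.mul_kronecker_mul, Matrix.mul_one]
    rw [h1, h2, ← Matrix.mulVec_mulVec, ← Matrix.mulVec_mulVec, ← Matrix.mulVec_add]
    have hWfun : ((1 : Matrix m m ℝ) ⊗ₖ Iy).mulVec u + (Ix ⊗ₖ (1 : Matrix n n ℝ)).mulVec v
        = fun q : m × n => f q.1 + g q.2 := by
      funext ij
      obtain ⟨i, j⟩ := ij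
      simpa using hW i j
    rw [hWfun]
  refine ⟨?_, ?_, ?_⟩
  · rw [hp, kron_const_left Dx My c hDx, hfac,
      kron_split_zero Dxx Dy f g hDxx hDy, smul_zero, add_zero]
  · rw [hp, kron_const_right Mx Dy c hDy, hfac,
      kron_split_zero Dx Dyy f g hDx hDyy, smul_zero, add_zero]
  · rw [hfac, kron_split_zero Dx Dy f g hDx hDy, hp, Matrix.add_mulVec,
      kron_const_left Dxx My c hDxx, kron_const_right Mx Dyy c hDyy]
    simp
end

section
/- Let m, n be finite types; let M_x, D_x, Dˣ, Dˣ_x, I_x be real m×m matrices with M_x invertible, and M_y, D_y, Dʸ, Dʸ_y, I_y real n×n matrices with M_y invertible; let α, h, c be real numbers. Define Z_x := Dˣ_x − Dˣ·M_x⁻¹·D_x and Z_y := Dʸ_y − Dʸ·M_y⁻¹·D_y. Assume D_x·𝟙 = 0, Dˣ_x·𝟙 = 0, D_y·𝟙 = 0, Dʸ_y·𝟙 = 0. Let u, v : m×n → ℝ, let p = c·𝟙, and assume that W := (𝕀_m ⊗ I_y)·u + (I_x ⊗ 𝕀_n)·v has the form W(i,j) = f(i) + g(j) for some f : m → ℝ,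 g : n → ℝ. Then all three block equations of the Global Flux OSS scheme vanish: (i) (D_x ⊗ M_y)·p + αh·[(Z_x ⊗ (D_y·I_y))·u + ((Z_x·I_x) ⊗ D_y)·v] = 0; (ii) (M_x ⊗ D_y)·p + αh·[(D_x ⊗ (Z_y·I_y))·u + ((D_x·I_x) ⊗ Z_y)·v] = 0; (iii) (D_x ⊗ (D_y·I_y))·u + ((D_x·I_x) ⊗ D_y)·v + αh·[(Z_x ⊗ M_y) + (M_x ⊗ Z_y)]·p = 0. Hence (u,v,p) is a steady state of the OSS-GFq evolution operator. -/
open Kronecker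

private lemma kron_split {m n : Type*} [Fintype m] [Fintype n]
    (A : Matrix m m ℝ) (B : Matrix n n ℝ) (f : m → ℝ) (g : n → ℝ) (i : m) (j : n) :
    (A ⊗ₖ B).mulVec (fun ij => f ij.1 + g ij.2) (i, j)
      = A.mulVec f i * B.mulVec (fun _ => (1:ℝ)) j
        + A.mulVec (fun _ => (1:ℝ)) i * B.mulVec g j := by
  simp only [Matrix.mulVec, dotProduct, Matrix.kroneckerMap_apply,
    Fintype.sum_prod_type]
  rw [Finset.sum_mul_sum, Finset.sum_mul_sum, ← Finset.sum_add_distrib]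
  refine Finset.sum_congr rfl fun k _ => ?_
  rw [← Finset.sum_add_distrib]
  refine Finset.sum_congr rfl fun l _ => ?_
  ring

/-- Equilibria of the Global-Flux-quadrature OSS scheme: any state with constant pressure
and velocities whose global flux potential `W = (𝕀 ⊗ I_y)u + (I_x ⊗ 𝕀)v` splits as
`W(i,j) = f(i) + g(j)` makes all three block equations of the OSS-GFq evolution
operator vanish, where `Z_x = Dˣ_x − Dˣ M_x⁻¹ D_x` and `Z_y = Dʸ_y − Dʸ M_y⁻¹ D_y`
are the OSS stabilization matrices. -/
theorem oss_gfq_equilibrium {m n : Type*} [Fintype m] [Fintype n]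
    [DecidableEq m] [DecidableEq n]
    (Mx Dx Dupx Dxx Ix : Matrix m m ℝ) (hMx : IsUnit Mx)
    (My Dy Dupy Dyy Iy : Matrix n n ℝ) (hMy : IsUnit My)
    (α h c : ℝ)
    (Zx : Matrix m m ℝ) (hZx : Zx = Dxx - Dupx * Mx⁻¹ * Dx)
    (Zy : Matrix n n ℝ) (hZy : Zy = Dyy - Dupy * My⁻¹ * Dy)
    (hDx : Dx.mulVec (fun _ => (1 : ℝ)) = 0)
    (hDxx : Dxx.mulVec (fun _ => (1 : ℝ)) = 0)
    (hDy : Dy.mulVec (fun _ => (1 : ℝ)) = 0)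
    (hDyy : Dyy.mulVec (fun _ => (1 : ℝ)) = 0)
    (u v p : m × n → ℝ)
    (hp : p = c • (1 : m × n → ℝ))
    (f : m → ℝ) (g : n → ℝ)
    (hW : ∀ i j,
      ((1 : Matrix m m ℝ) ⊗ₖ Iy).mulVec u (i, j) + (Ix ⊗ₖ (1 : Matrix n n ℝ)).mulVec v (i, j)
        = f i + g j) :
    (Dx ⊗ₖ My).mulVec p
        + (α * h) • ((Zx ⊗ₖ (Dy * Iy)).mulVec u + ((Zx * Ix) ⊗ₖ Dy).mulVec v) = 0 ∧
    (Mx ⊗ₖ Dy).mulVec p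
        + (α * h) • ((Dx ⊗ₖ (Zy * Iy)).mulVec u + ((Dx * Ix) ⊗ₖ Zy).mulVec v) = 0 ∧
    (Dx ⊗ₖ (Dy * Iy)).mulVec u + ((Dx * Ix) ⊗ₖ Dy).mulVec v
        + (α * h) • ((Zx ⊗ₖ My) + (Mx ⊗ₖ Zy)).mulVec p = 0 := by
  -- stabilization matrices kill the constant vector
  have hZx1 : Zx.mulVec (fun _ => (1:ℝ)) = 0 := by
    rw [hZx, Matrix.sub_mulVec, hDxx, ← Matrix.mulVec_mulVec, hDx, Matrix.mulVec_zero, sub_zero]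
  have hZy1 : Zy.mulVec (fun _ => (1:ℝ)) = 0 := by
    rw [hZy, Matrix.sub_mulVec, hDyy, ← Matrix.mulVec_mulVec, hDy, Matrix.mulVec_zero, sub_zero]
  -- the global flux potential
  set W : m × n → ℝ := fun ij => f ij.1 + g ij.2 with hWdef
  have hWeq : ((1 : Matrix m m ℝ) ⊗ₖ Iy).mulVec u + (Ix ⊗ₖ (1 : Matrix n n ℝ)).mulVec v = W := by
    funext ij
    obtain ⟨i, j⟩ := ij
    exact hW i j
  -- any Kronecker product annihilating 1 on either factor kills the constant pressure
  have hp0 : ∀ (A : Matrix m m ℝ) (B : Matrix n n ℝ),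
      A.mulVec (fun _ => (1:ℝ)) = 0 ∨ B.mulVec (fun _ => (1:ℝ)) = 0 →
      (A ⊗ₖ B).mulVec p = 0 := by
    intro A B hAB
    have hpW : p = fun ij : m × n => (fun _ : m => c) ij.1 + (fun _ : n => (0:ℝ)) ij.2 := by
      rw [hp]; funext ij; simp
    funext ij
    obtain ⟨i, j⟩ := ij
    rw [hpW, kron_split A B (fun _ => c) (fun _ => (0:ℝ)) i j]
    have hc1 : (fun _ : m => c) = c • (fun _ : m => (1:ℝ)) :=
      funext fun _ => (mul_one c).symm
    have hAc : A.mulVec (fun _ : m => c) = c • A.mulVec (fun _ => (1:ℝ)) := by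
      rw [hc1, Matrix.mulVec_smul]
    have hB0 : B.mulVec (fun _ : n => (0:ℝ)) = 0 := by
      have : (fun _ : n => (0:ℝ)) = (0 : n → ℝ) := rfl
      rw [this, Matrix.mulVec_zero]
    rw [hAc, hB0]
    rcases hAB with hA | hB
    · rw [hA]; simp
    · rw [hB]; simp
  -- velocities combine into (A ⊗ B) W, which vanishes when both kill 1
  have hW0 : ∀ (A : Matrix m m ℝ) (B : Matrix n n ℝ),
      A.mulVec (fun _ => (1:ℝ)) = 0 → B.mulVec (fun _ => (1:ℝ)) = 0 →
      (A ⊗ₖ (B * Iy)).mulVec u + ((A * Ix) ⊗ₖ B).mulVec v = 0 := by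
    intro A B hA hB
    have e1 : A ⊗ₖ (B * Iy) = (A ⊗ₖ B) * ((1 : Matrix m m ℝ) ⊗ₖ Iy) := by
      rw [← Matrix.mul_kronecker_mul, Matrix.mul_one]
    have e2 : (A * Ix) ⊗ₖ B = (A ⊗ₖ B) * (Ix ⊗ₖ (1 : Matrix n n ℝ)) := by
      rw [← Matrix.mul_kronecker_mul, Matrix.mul_one]
    rw [e1, e2, ← Matrix.mulVec_mulVec, ← Matrix.mulVec_mulVec, ← Matrix.mulVec_add, hWeq]
    funext ij
    obtain ⟨i, j⟩ := ij
    rw [hWdef, kron_split A B f g i j, hA, hB]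
    simp
  refine ⟨?_, ?_, ?_⟩
  · rw [hp0 Dx My (Or.inl hDx), hW0 Zx Dy hZx1 hDy]
    simp
  · rw [hp0 Mx Dy (Or.inr hDy), hW0 Dx Zy hDx hZy1]
    simp
  · rw [hW0 Dx Dy hDx hDy, Matrix.add_mulVec, hp0 Zx My (Or.inl hZx1),
      hp0 Mx Zy (Or.inr hZy1)]
    simp
end

section
/- Let m, n be finite types with N := |m × n|; let M_x, D_x, Dˣ_x, I_x be real m×m matrices, M_y, D_y, Dʸ_y, I_y real n×n matrices, and α, h real numbers. Let E be the real square matrix indexed by Fin 3 × (m×n) whose nine Kronecker blocks are E₁₁ = αh·(Dˣ_x ⊗ (D_y·I_y)), E₁₂ = αh·((Dˣ_x·I_x) ⊗ D_y), E₁₃ = D_x ⊗ M_y, E₂₁ = αh·(D_x ⊗ (Dʸ_y·I_y)), E₂₂ = αh·((D_x·I_x) ⊗ Dʸ_y), E₂₃ = M_x ⊗ D_y, E₃₁ = D_x ⊗ (D_y·I_y), E₃₂ = (D_x·I_x) ⊗ D_y, E₃₃ = αh·((Dˣ_x ⊗ M_y) + (M_x ⊗ Dʸ_y)). Then the rank of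 E is at most 2N, and consequently the kernel of the transpose of E (the space of discrete involutions of the SUPG-GFq scheme) has dimension at least N. -/
open Kronecker

/-- The evolution operator `E` of the SUPG-GFq scheme factors through the pair
`(U+V, p)`, hence its rank is at most `2N` where `N = |m × n|`, and the space of
discrete involutions (the kernel of `E.transpose`) has dimension at least `N`. -/
theorem supg_gfq_involutions_exist {m n : Type*} [Fintype m] [Fintype n]
    [DecidableEq m] [DecidableEq n]
    (Mx Dx Dxx Ix : Matrix m m ℝ) (My Dy Dyy Iy : Matrix n n ℝ)
    (α h : ℝ)
    (N : ℕ) (hN : N = Fintype.card (m × n))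
    (B : Fin 3 → Fin 3 → Matrix (m × n) (m × n) ℝ)
    (hB : B = ![
      ![ (α * h) • (Dxx ⊗ₖ (Dy * Iy)), (α * h) • ((Dxx * Ix) ⊗ₖ Dy), Dx ⊗ₖ My ],
      ![ (α * h) • (Dx ⊗ₖ (Dyy * Iy)), (α * h) • ((Dx * Ix) ⊗ₖ Dyy), Mx ⊗ₖ Dy ],
      ![ Dx ⊗ₖ (Dy * Iy), (Dx * Ix) ⊗ₖ Dy, (α * h) • ((Dxx ⊗ₖ My) + (Mx ⊗ₖ Dyy)) ]])
    (E : Matrix (Fin 3 × (m × n)) (Fin 3 × (m × n)) ℝ)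
    (hE : ∀ a b ij kl, E (a, ij) (b, kl) = B a b ij kl) :
    E.rank ≤ 2 * N ∧
      N ≤ Module.finrank ℝ (LinearMap.ker (Matrix.mulVecLin E.transpose)) := by
  classical
  set PB : Fin 3 → Fin 2 → Matrix (m × n) (m × n) ℝ :=
    ![![ (α * h) • (Dxx ⊗ₖ Dy), Dx ⊗ₖ My ],
      ![ (α * h) • (Dx ⊗ₖ Dyy), Mx ⊗ₖ Dy ],
      ![ Dx ⊗ₖ Dy, (α * h) • ((Dxx ⊗ₖ My) + (Mx ⊗ₖ Dyy)) ]] with hPB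
  set QB : Fin 2 → Fin 3 → Matrix (m × n) (m × n) ℝ :=
    ![![ (1 : Matrix m m ℝ) ⊗ₖ Iy, Ix ⊗ₖ (1 : Matrix n n ℝ), 0 ],
      ![ 0, 0, 1 ]] with hQB
  set P : Matrix (Fin 3 × (m × n)) (Fin 2 × (m × n)) ℝ :=
    fun x y => PB x.1 y.1 x.2 y.2 with hP
  set Q : Matrix (Fin 2 × (m × n)) (Fin 3 × (m × n)) ℝ :=
    fun x y => QB x.1 y.1 x.2 y.2 with hQ
  have key : ∀ a b, B a b = ∑ c : Fin 2, PB a c * QB c b := by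
    subst hB
    intro a b
    fin_cases a <;> fin_cases b <;>
      simp [hPB, hQB, Fin.sum_univ_two, ← Matrix.mul_kronecker_mul,
        smul_mul_assoc, Matrix.mul_one, Matrix.one_mul]
  have hEPQ : E = P * Q := by
    ext ⟨a, ij⟩ ⟨b, kl⟩
    rw [hE, Matrix.mul_apply, key a b, Matrix.sum_apply, Fintype.sum_prod_type]
    rfl
  have h1 : E.rank ≤ 2 * N := by
    calc E.rank ≤ P.rank := by rw [hEPQ]; exact Matrix.rank_mul_le_left P Q
    _ ≤ Fintype.card (Fin 2 × (m × n)) := Matrix.rank_le_card_width P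
    _ = 2 * N := by simp [hN, Fintype.card_prod]
  refine ⟨h1, ?_⟩
  have h2 := LinearMap.finrank_range_add_finrank_ker (Matrix.mulVecLin E.transpose)
  have h3 : Module.finrank ℝ (LinearMap.range (Matrix.mulVecLin E.transpose))
      = E.rank := by
    rw [← Matrix.rank_transpose E]; rfl
  have h4 : Module.finrank ℝ ((Fin 3 × (m × n)) → ℝ)
      = 3 * N := by
    simp [Module.finrank_fintype_fun_eq_card, hN, Fintype.card_prod]
  rw [h3, h4] at h2
  omega
end

section
/- Let ι be a finite type, let 𝓛, 𝓐, 𝓔 be real ι×ι matrices with 𝓛 invertible, let Δt be a real number, let M ≥ 1 and θ : Fin (M+1) → Fin (M+1) → ℝ, and let q̄ : ι → ℝ satisfy 𝓔·q̄ = 0. Define the Deferred Correction iterates q : ℕ → Fin (M+1) → (ι → ℝ) by: q(0)(m) = q̄ for all m; q(p)(0) = q̄ for all p; and for p ≥ 1 and m ≠ 0, q(p)(m) = q(p−1)(m) − 𝓛⁻¹·(𝓐·(q(p−1)(m) − q̄)) − Δt·𝓛⁻¹·(∑_{r=0}^{M} θ(m)(r) • (𝓔·q(p−1)(r))). Then q(p)(m)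 = q̄ for all p and all m; in particular the Deferred Correction time stepping preserves every steady state of the spatial operator 𝓔. -/
/-- The Deferred Correction time stepping preserves every steady state of the spatial
operator `𝓔`: if `𝓔 q̄ = 0` and the DeC iterates start from `q̄`, then all iterates at
all sub-timenodes equal `q̄`. -/
theorem dec_preserves_steady_state {ι : Type*} [Fintype ι] [DecidableEq ι]
    (L A E : Matrix ι ι ℝ) (hL : IsUnit L)
    (Δt : ℝ) (M : ℕ) (hM : 1 ≤ M)
    (θ : Fin (M + 1) → Fin (M + 1) → ℝ)
    (qbar : ι → ℝ) (hqbar : E.mulVec qbar = 0)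
    (q : ℕ → Fin (M + 1) → (ι → ℝ))
    (h0 : ∀ m, q 0 m = qbar)
    (h0' : ∀ p, q p 0 = qbar)
    (hrec : ∀ (p : ℕ) (m : Fin (M + 1)), m ≠ 0 →
      q (p + 1) m = q p m - L⁻¹.mulVec (A.mulVec (q p m - qbar))
        - Δt • L⁻¹.mulVec (∑ r : Fin (M + 1), θ m r • E.mulVec (q p r))) :
    ∀ p m, q p m = qbar := by
  intro p
  induction p with
  | zero => exact h0
  | succ p ih =>
    intro m
    by_cases hm : m = 0
    · rw [hm]; exact h0' _
    · rw [hrec p m hm, ih m]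
      have : ∀ r : Fin (M + 1), θ m r • E.mulVec (q p r) = 0 := by
        intro r; rw [ih r, hqbar, smul_zero]
      simp [this, hqbar, Matrix.mulVec_zero]
end

section
/- Let K ≥ 1. Let x₀, …, x_K be K+1 pairwise distinct real numbers and y₀, …, y_{K−1} be K pairwise distinct real numbers. Let φ_j (j = 0,…,K) be the Lagrange basis polynomials associated with the nodes x₀,…,x_K (so φ_j(x_i) = δ_{ij}, deg φ_j = K), and let ψ_i (i = 0,…,K−1) be the Lagrange basis polynomials associated with the nodes y₀,…,y_{K−1} (deg ψ_i = K−1). Then the K×K real matrix D with entries D_{ij} = ∫₀¹ φ_j′(t)·ψ_i(t) dt for i = 0,…,K−1 and j = 1,…,K is invertible. -/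
open Polynomial

lemma poly_eq_zero_of_sq_integral_zero (q : ℝ[X])
    (h : ∫ t in (0:ℝ)..1, q.eval t * q.eval t = 0) : q = 0 := by
  by_contra hq
  have hcont : Continuous fun t : ℝ => q.eval t * q.eval t := q.continuous.mul q.continuous
  have hle : ∀ t ∈ Set.Ioc (0:ℝ) 1, 0 ≤ q.eval t * q.eval t := fun t _ => mul_self_nonneg _
  obtain ⟨c, hc, hcroot⟩ := (Set.Icc_infinite (show (0:ℝ) < 1 by norm_num)).exists_notMem_finset
    q.roots.toFinset
  have hcne : q.eval c ≠ 0 := by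
    intro h0
    exact hcroot (Multiset.mem_toFinset.2 ((Polynomial.mem_roots hq).2 h0))
  have hpos : 0 < ∫ t in (0:ℝ)..1, q.eval t * q.eval t :=
    intervalIntegral.integral_pos (by norm_num) hcont.continuousOn hle
      ⟨c, hc, mul_self_pos.2 hcne⟩
  exact hpos.ne' h

/-- Invertibility of the mixed derivative matrix: for pairwise distinct nodes
`x₀, …, x_K` and `y₀, …, y_{K−1}`, the `K × K` matrix with entries
`D_{ij} = ∫₀¹ φ_{j+1}'(t) ψ_i(t) dt` (`φ` the degree-`K` Lagrange basis for the `x`-nodes,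
`ψ` the degree-`(K−1)` Lagrange basis for the `y`-nodes) is invertible. -/
theorem mixed_derivative_matrix_invertible {K : ℕ} (hK : 1 ≤ K)
    (x : Fin (K + 1) → ℝ) (hx : Function.Injective x)
    (y : Fin K → ℝ) (hy : Function.Injective y)
    (φ : Fin (K + 1) → ℝ[X]) (hφ : φ = fun j => Lagrange.basis Finset.univ x j)
    (ψ : Fin K → ℝ[X]) (hψ : ψ = fun i => Lagrange.basis Finset.univ y i)
    (D : Matrix (Fin K) (Fin K) ℝ)
    (hD : ∀ i j : Fin K,
      D i j = ∫ t in (0:ℝ)..1, (Polynomial.derivative (φ j.succ)).eval t * (ψ i).eval t) :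
    IsUnit D := by
  have hxinj : Set.InjOn x ↑(Finset.univ : Finset (Fin (K+1))) := hx.injOn
  have hyinj : Set.InjOn y ↑(Finset.univ : Finset (Fin K)) := hy.injOn
  rw [Matrix.isUnit_iff_isUnit_det, isUnit_iff_ne_zero]
  intro hdet
  obtain ⟨c, hc0, hcv⟩ := Matrix.exists_mulVec_eq_zero_iff.2 hdet
  -- the polynomial p = Σ c_j φ_{j+1}
  set p : ℝ[X] := ∑ j : Fin K, C (c j) * φ j.succ with hp
  set q : ℝ[X] := derivative p with hqdef
  -- each ∫ q ψ_i = 0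
  have key : ∀ i : Fin K, (∫ t in (0:ℝ)..1, q.eval t * (ψ i).eval t) = 0 := by
    intro i
    have := congrFun hcv i
    simp only [Matrix.mulVec, dotProduct, Pi.zero_apply] at this
    have integ : ∀ j : Fin K, IntervalIntegrable
        (fun t => c j * ((Polynomial.derivative (φ j.succ)).eval t * (ψ i).eval t))
        MeasureTheory.volume 0 1 := by
      intro j
      exact Continuous.intervalIntegrable
        (continuous_const.mul (((derivative (φ j.succ)).continuous).mul (ψ i).continuous)) _ _
    calc (∫ t in (0:ℝ)..1, q.eval t * (ψ i).eval t)
        = ∫ t in (0:ℝ)..1, ∑ j : Fin K,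
            c j * ((Polynomial.derivative (φ j.succ)).eval t * (ψ i).eval t) := by
          congr 1; funext t
          simp only [hqdef, hp, derivative_sum, derivative_mul, derivative_C, zero_mul,
            zero_add, eval_finset_sum, eval_mul, eval_C, Finset.sum_mul, mul_assoc]
      _ = ∑ j : Fin K, ∫ t in (0:ℝ)..1,
            c j * ((Polynomial.derivative (φ j.succ)).eval t * (ψ i).eval t) :=
          intervalIntegral.integral_finset_sum (fun j _ => integ j)
      _ = ∑ j : Fin K, c j *
            ∫ t in (0:ℝ)..1, (Polynomial.derivative (φ j.succ)).eval t * (ψ i).eval t := by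
          simp_rw [intervalIntegral.integral_const_mul]
      _ = ∑ j : Fin K, D i j * c j := by
          refine Finset.sum_congr rfl fun j _ => ?_
          rw [hD i j, mul_comm]
      _ = 0 := this
  -- q has degree < K, hence equals its interpolation at the y-nodes
  have hqdeg : q.degree < (Finset.univ : Finset (Fin K)).card := by
    have h1 : p.natDegree ≤ K := by
      refine Polynomial.natDegree_sum_le_of_forall_le _ _ fun j _ => ?_
      refine (Polynomial.natDegree_mul_le).trans ?_
      simp [hφ, Polynomial.natDegree_C, Lagrange.natDegree_basis hxinj (Finset.mem_univ _)]
    have h2 : q.natDegree ≤ K - 1 := by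
      have := Polynomial.natDegree_derivative_le p
      rw [hqdef]; omega
    calc q.degree ≤ (q.natDegree : WithBot ℕ) := Polynomial.degree_le_natDegree
      _ ≤ ((K - 1 : ℕ) : WithBot ℕ) := by exact_mod_cast h2
      _ < ((Finset.univ : Finset (Fin K)).card : WithBot ℕ) := by
          simp only [Finset.card_univ, Fintype.card_fin]
          exact_mod_cast Nat.sub_lt (by omega) one_pos
  have hq_interp : q = Lagrange.interpolate Finset.univ y (fun i => q.eval (y i)) :=
    Lagrange.eq_interpolate hyinj hqdeg
  -- therefore ∫ q·q = 0
  have hsq : (∫ t in (0:ℝ)..1, q.eval t * q.eval t) = 0 := by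
    calc (∫ t in (0:ℝ)..1, q.eval t * q.eval t)
        = ∫ t in (0:ℝ)..1, ∑ i : Fin K, q.eval (y i) * (q.eval t * (ψ i).eval t) := by
          congr 1; funext t
          conv_lhs => rw [show q.eval t * q.eval t = q.eval t * q.eval t from rfl]
          nth_rewrite 2 [hq_interp]
          rw [Lagrange.interpolate_apply, eval_finset_sum, Finset.mul_sum]
          refine Finset.sum_congr rfl fun i _ => ?_
          rw [eval_mul, eval_C, hψ]
          ring
      _ = ∑ i : Fin K, ∫ t in (0:ℝ)..1, q.eval (y i) * (q.eval t * (ψ i).eval t) :=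
          intervalIntegral.integral_finset_sum
            (fun i _ => Continuous.intervalIntegrable
              (continuous_const.mul (q.continuous.mul (ψ i).continuous)) _ _)
      _ = ∑ i : Fin K, q.eval (y i) * ∫ t in (0:ℝ)..1, q.eval t * (ψ i).eval t := by
          simp_rw [intervalIntegral.integral_const_mul]
      _ = 0 := by simp [key]
  have hq0 : q = 0 := poly_eq_zero_of_sq_integral_zero q hsq
  -- so p is constant
  have hpdeg : p.natDegree = 0 := Polynomial.natDegree_eq_zero_of_derivative_eq_zero hq0
  have hpC : p = C (p.coeff 0) := Polynomial.eq_C_of_natDegree_eq_zero hpdeg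
  -- p(x 0) = 0
  have hpx0 : p.eval (x 0) = 0 := by
    rw [hp, eval_finset_sum]
    refine Finset.sum_eq_zero fun j _ => ?_
    rw [eval_mul, eval_C, hφ]
    rw [Lagrange.eval_basis_of_ne (Fin.succ_ne_zero j) (Finset.mem_univ _), mul_zero]
  have hp0 : p = 0 := by
    rw [hpC] at hpx0 ⊢
    simp only [eval_C] at hpx0
    rw [hpx0, map_zero]
  -- but p(x j.succ) = c j
  apply hc0
  funext j
  have : p.eval (x j.succ) = c j := by
    rw [hp, eval_finset_sum]
    rw [Finset.sum_eq_single j]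
    · rw [eval_mul, eval_C, hφ, Lagrange.eval_basis_self hxinj (Finset.mem_univ _), mul_one]
    · intro b _ hbj
      rw [eval_mul, eval_C, hφ,
        Lagrange.eval_basis_of_ne (fun h => hbj (Fin.succ_injective _ h)) (Finset.mem_univ _),
        mul_zero]
    · intro h; exact absurd (Finset.mem_univ j) h
  rw [hp0] at this
  simpa using this.symm
end

section
/- Let m, n be finite types; let D_x, Dˣ, Dˣ_x, M_x be real m×m matrices with M_x invertible, and D_y, M_y real n×n matrices with M_y invertible. Then for all u, v : m×n → ℝ: (Dˣ_x ⊗ M_y)·u + (Dˣ ⊗ D_y)·v − (Dˣ ⊗ M_y)·(M_x ⊗ M_y)⁻¹·[(D_x ⊗ M_y)·u + (M_x ⊗ D_y)·v] = ((Dˣ_x − Dˣ·M_x⁻¹·D_x) ⊗ M_y)·u. In particular, the OSS stabilization term for the first velocity component reduces to (Z_x ⊗ M_y)·u with Z_x := Dˣ_x − Dˣ·M_x⁻¹·D_x. -/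
open Kronecker

theorem sub_kronecker' {l m n p : Type*} (A B : Matrix l m ℝ) (C : Matrix n p ℝ) :
    (A - B) ⊗ₖ C = A ⊗ₖ C - B ⊗ₖ C := by
  ext ⟨i,j⟩ ⟨k,l⟩
  simp [Matrix.kroneckerMap, sub_mul]

/-- The OSS stabilization term for the first velocity component reduces to
`(Z_x ⊗ M_y)·u` with `Z_x = Dˣ_x − Dˣ M_x⁻¹ D_x`: the grad-div term minus its
evaluation on the L² projection of the divergence. -/
theorem oss_stabilization_reduction {m n : Type*} [Fintype m] [Fintype n]
    [DecidableEq m] [DecidableEq n]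
    (Dx Dupx Dxx Mx : Matrix m m ℝ) (hMx : IsUnit Mx)
    (Dy My : Matrix n n ℝ) (hMy : IsUnit My) :
    ∀ u v : m × n → ℝ,
      (Dxx ⊗ₖ My).mulVec u + (Dupx ⊗ₖ Dy).mulVec v
        - (Dupx ⊗ₖ My).mulVec ((Mx ⊗ₖ My)⁻¹.mulVec
            ((Dx ⊗ₖ My).mulVec u + (Mx ⊗ₖ Dy).mulVec v))
        = ((Dxx - Dupx * Mx⁻¹ * Dx) ⊗ₖ My).mulVec u := by
  intro u v
  have hdx : IsUnit Mx.det := (Matrix.isUnit_iff_isUnit_det Mx).mp hMx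
  have hdy : IsUnit My.det := (Matrix.isUnit_iff_isUnit_det My).mp hMy
  simp only [Matrix.inv_kronecker, Matrix.mulVec_add, Matrix.mulVec_mulVec,
    ← Matrix.mul_kronecker_mul, Matrix.mul_assoc,
    Matrix.nonsing_inv_mul Mx hdx, Matrix.nonsing_inv_mul My hdy,
    Matrix.mul_nonsing_inv My hdy, Matrix.mul_one, Matrix.one_mul,
    Matrix.mul_nonsing_inv_cancel_left My Dy hdy, sub_kronecker', Matrix.sub_mulVec]
  abel
end

section
/- Let R be a commutative ring and let dx, dxx, mx, dy, dyy, my, ix, iy, a be elements of R (representing the ℚ¹ Fourier symbols of D_x, Dˣ_x, M_x, D_y, Dʸ_y, M_y, I_x, I_y and the product αh). Let E be the 3×3 matrix over R with rows (a·dxx·dy·iy, a·dxx·ix·dy, dx·my), (a·dx·dyy·iy, a·dx·ix·dyy, mx·dy), (dx·dy·iy, dx·ix·dy, a·(dxx·my + mx·dyy)). Then E·(−ix, iy, 0)ᵀ = 0; moreover, if R is an integral domain and (ix, iy) ≠ (0, 0), then det E = 0. Hence the ℚ¹ Global-Flux SUPG scheme possesses non-trivial discrete stationary states, whose symbol is parallel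 to (−F(I_x), F(I_y), 0). -/
open Matrix

/-- The ℚ¹ Global-Flux SUPG symbol matrix `E` has the non-trivial right-kernel vector
`(−ix, iy, 0)`; in particular, over an integral domain, if `(ix, iy) ≠ (0, 0)` then
`det E = 0`, so the scheme possesses non-trivial discrete stationary states. -/
theorem supg_gfq_Q1_stationary_states {R : Type*} [CommRing R]
    (dx dxx mx dy dyy my ix iy a : R)
    (E : Matrix (Fin 3) (Fin 3) R)
    (hE : E = !![a * dxx * dy * iy, a * dxx * ix * dy, dx * my;
                 a * dx * dyy * iy, a * dx * ix * dyy, mx * dy;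
                 dx * dy * iy, dx * ix * dy, a * (dxx * my + mx * dyy)]) :
    E.mulVec ![-ix, iy, 0] = 0 ∧
      (IsDomain R → (ix, iy) ≠ ((0 : R), (0 : R)) → E.det = 0) := by
  have hker : E.mulVec ![-ix, iy, 0] = 0 := by
    subst hE
    funext i
    fin_cases i <;>
      simp [Matrix.mulVec, dotProduct, Fin.sum_univ_three] <;> ring
  refine ⟨hker, fun _ hne => ?_⟩
  have h := congrArg (fun w => (E.adjugate).mulVec w) hker
  simp only [Matrix.mulVec_mulVec, Matrix.adjugate_mul, Matrix.smul_mulVec,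
    Matrix.one_mulVec, Matrix.mulVec_zero] at h
  have h0 := congrFun h 0
  have h1 := congrFun h 1
  simp [smul_eq_mul] at h0 h1
  rcases h0 with h | hix
  · exact h
  · rcases h1 with h | hiy
    · exact h
    · exact absurd (Prod.ext hix hiy) hne
end
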